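/- arXiv:1708.03455 — 5 statements merged into one kernel-verified Lean document; each statement's English description precedes it below -/
import Mathlib

section
/- If σ₁ and σ₂ are barycenters of a k-dimensional and an l-dimensional simplex of Δ_κ respectively, and their supports intersect (they are contiguous), then ‖σ₁ - σ₂‖₂ ≤ κ/√2. -/
/-- The ℓ² distance between two sequences of reals. -/
noncomputable def l2d (a b : ℕ → ℝ) : ℝ := Real.sqrt (∑' m, (a m - b m) ^ 2)


lemma stmt2_aux (κ p q : ℝ) (hp : 1 ≤ p) (hq : 1 ≤ q) :
    κ ^ 2 / (p * 2) + κ ^ 2 / (q * 2) - κ ^ 2 / (p * q) ≤ κ ^ 2 / 2 := by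
  have hp0 : (0:ℝ) < p := lt_of_lt_of_le one_pos hp
  have hq0 : (0:ℝ) < q := lt_of_lt_of_le one_pos hq
  have hpq : p + q - 2 ≤ p * q := by
    nlinarith [mul_nonneg (sub_nonneg.mpr hp) (sub_nonneg.mpr hq)]
  have hkey : κ ^ 2 * (p * q) * (p + q - 2) ≤ κ ^ 2 * (p * q) * (p * q) :=
    mul_le_mul_of_nonneg_left hpq (by positivity)
  rw [div_add_div _ _ (by positivity) (by positivity),
    div_sub_div _ _ (by positivity) (by positivity),
    div_le_div_iff₀ (by positivity) (by norm_num : (0:ℝ) < 2)]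
  nlinarith [hkey, mul_pos hp0 hq0]

/-- If `σ₁` and `σ₂` are barycenters of a `k`-dimensional and an `l`-dimensional
simplex of `Δ_κ` respectively (supported on index sets `S`, `T` with `|S| = k+1`,
`|T| = l+1`), and their supports intersect (they are contiguous), then
`‖σ₁ - σ₂‖₂ ≤ κ/√2`. -/
theorem stmt2 (κ : ℝ) (hκ : 0 < κ) (k l : ℕ) (S T : Finset ℕ)
    (hS : S.card = k + 1) (hT : T.card = l + 1) (hST : (S ∩ T).Nonempty) :
    l2d (fun i => if i ∈ S then κ / (((k : ℝ) + 1) * Real.sqrt 2) else 0)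
        (fun i => if i ∈ T then κ / (((l : ℝ) + 1) * Real.sqrt 2) else 0)
      ≤ κ / Real.sqrt 2 := by
  set a : ℝ := κ / (((k : ℝ) + 1) * Real.sqrt 2) with ha
  set b : ℝ := κ / (((l : ℝ) + 1) * Real.sqrt 2) with hb
  have h2 : (0:ℝ) < Real.sqrt 2 := Real.sqrt_pos.mpr (by norm_num)
  have hp : (0:ℝ) < (k:ℝ) + 1 := by positivity
  have hq : (0:ℝ) < (l:ℝ) + 1 := by positivity
  have hA : 0 < a := by positivity
  have hB : 0 < b := by positivity
  have hf : ∀ i ∉ S ∪ T,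
      ((if i ∈ S then a else 0) - (if i ∈ T then b else 0)) ^ 2 = 0 := by
    intro i hi
    simp only [Finset.mem_union] at hi
    push_neg at hi
    simp [hi.1, hi.2]
  unfold l2d
  rw [tsum_eq_sum hf]
  have hsum : ∑ i ∈ S ∪ T, ((if i ∈ S then a else 0) - (if i ∈ T then b else 0)) ^ 2
      = (S.card : ℝ) * a ^ 2 + (T.card : ℝ) * b ^ 2
        - ((S ∩ T).card : ℝ) * (2 * a * b) := by
    have : ∀ i ∈ S ∪ T, ((if i ∈ S then a else 0) - (if i ∈ T then b else 0)) ^ 2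
        = (if i ∈ S then a ^ 2 else 0) + (if i ∈ T then b ^ 2 else 0)
          - (if i ∈ S ∩ T then 2 * a * b else 0) := by
      intro i _
      by_cases h1 : i ∈ S <;> by_cases h2 : i ∈ T <;>
        simp [h1, h2, Finset.mem_inter] <;> ring
    rw [Finset.sum_congr rfl this]
    rw [Finset.sum_sub_distrib, Finset.sum_add_distrib]
    rw [Finset.sum_ite_mem, Finset.sum_ite_mem, Finset.sum_ite_mem]
    rw [Finset.union_inter_cancel_left, Finset.union_inter_cancel_right]
    have h3 : (S ∪ T) ∩ (S ∩ T) = S ∩ T := by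
      rw [Finset.inter_eq_right]
      exact (Finset.inter_subset_left).trans Finset.subset_union_left
    rw [h3]
    simp [Finset.sum_const, nsmul_eq_mul]
  rw [hsum]
  have hM : (1:ℝ) ≤ ((S ∩ T).card : ℝ) := by
    have := Finset.card_pos.mpr hST
    exact_mod_cast this
  have hbound : (S.card : ℝ) * a ^ 2 + (T.card : ℝ) * b ^ 2
      - ((S ∩ T).card : ℝ) * (2 * a * b) ≤ (κ / Real.sqrt 2) ^ 2 := by
    have hstep : (S.card : ℝ) * a ^ 2 + (T.card : ℝ) * b ^ 2
        - ((S ∩ T).card : ℝ) * (2 * a * b)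
        ≤ (S.card : ℝ) * a ^ 2 + (T.card : ℝ) * b ^ 2 - (2 * a * b) := by
      nlinarith [mul_pos hA hB]
    refine hstep.trans ?_
    have hScard : (S.card : ℝ) = (k:ℝ) + 1 := by rw [hS]; push_cast; ring
    have hTcard : (T.card : ℝ) = (l:ℝ) + 1 := by rw [hT]; push_cast; ring
    have hs2 : Real.sqrt 2 ^ 2 = 2 := Real.sq_sqrt (by norm_num)
    have hss : Real.sqrt 2 * Real.sqrt 2 = 2 := Real.mul_self_sqrt (by norm_num)
    have ha2 : a ^ 2 = κ ^ 2 / (((k:ℝ) + 1) ^ 2 * 2) := by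
      rw [ha, div_pow, mul_pow, hs2]
    have hb2 : b ^ 2 = κ ^ 2 / (((l:ℝ) + 1) ^ 2 * 2) := by
      rw [hb, div_pow, mul_pow, hs2]
    have hab : a * b = κ ^ 2 / ((((k:ℝ) + 1) * ((l:ℝ) + 1)) * 2) := by
      rw [ha, hb, div_mul_div_comm, mul_mul_mul_comm, hss]
      ring_nf
    rw [hScard, hTcard, ha2, hb2, mul_assoc, hab]
    have hk1 : (1:ℝ) ≤ (k:ℝ) + 1 := by
      have := Nat.cast_nonneg (α := ℝ) k; linarith
    have hl1 : (1:ℝ) ≤ (l:ℝ) + 1 := by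
      have := Nat.cast_nonneg (α := ℝ) l; linarith
    have hk2 : (0:ℝ) < ((k:ℝ) + 1) ^ 2 * 2 := by positivity
    have hl2 : (0:ℝ) < ((l:ℝ) + 1) ^ 2 * 2 := by positivity
    rw [div_pow, hs2]
    have e3 : 2 * (κ ^ 2 / (((k:ℝ) + 1) * ((l:ℝ) + 1) * 2)) = κ ^ 2 / (((k:ℝ) + 1) * ((l:ℝ) + 1)) := by
      field_simp
    have e1 : ((k:ℝ) + 1) * (κ ^ 2 / (((k:ℝ) + 1) ^ 2 * 2)) = κ ^ 2 / (((k:ℝ) + 1) * 2) := by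
      field_simp
    have e2 : ((l:ℝ) + 1) * (κ ^ 2 / (((l:ℝ) + 1) ^ 2 * 2)) = κ ^ 2 / (((l:ℝ) + 1) * 2) := by
      field_simp
    rw [e1, e2, e3]
    exact stmt2_aux κ _ _ hk1 hl1
  calc Real.sqrt ((S.card : ℝ) * a ^ 2 + (T.card : ℝ) * b ^ 2
        - ((S ∩ T).card : ℝ) * (2 * a * b))
      ≤ Real.sqrt ((κ / Real.sqrt 2) ^ 2) := Real.sqrt_le_sqrt hbound
    _ = κ / Real.sqrt 2 := Real.sqrt_sq (by positivity)
end

section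
/- If σ₁ and σ₂ are barycenters of disjoint simplices of dimensions k and l in Δ_κ (their supports are disjoint), with k, l ≤ n, then ‖σ₁ - σ₂‖₂ ≥ κ/√(n+1). -/
/-- If `σ₁` and `σ₂` are barycenters of disjoint simplices of dimensions `k` and `l`
in `Δ_κ` (their supports `S`, `T` are disjoint, with `|S| = k+1`, `|T| = l+1`),
and `k, l ≤ n`, then `‖σ₁ - σ₂‖₂ ≥ κ/√(n+1)`. -/
theorem stmt3 (κ : ℝ) (hκ : 0 < κ) (n k l : ℕ) (hk : k ≤ n) (hl : l ≤ n)
    (S T : Finset ℕ) (hS : S.card = k + 1) (hT : T.card = l + 1)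
    (hST : Disjoint S T) :
    κ / Real.sqrt ((n : ℝ) + 1) ≤
      l2d (fun i => if i ∈ S then κ / (((k : ℝ) + 1) * Real.sqrt 2) else 0)
          (fun i => if i ∈ T then κ / (((l : ℝ) + 1) * Real.sqrt 2) else 0) := by
  set c : ℝ := κ / (((k : ℝ) + 1) * Real.sqrt 2) with hc
  set d : ℝ := κ / (((l : ℝ) + 1) * Real.sqrt 2) with hd
  have hs2 : Real.sqrt 2 ^ 2 = 2 := Real.sq_sqrt (by norm_num)
  have hkpos : (0:ℝ) < (k:ℝ) + 1 := by positivity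
  have hlpos : (0:ℝ) < (l:ℝ) + 1 := by positivity
  have hfun : ∀ m : ℕ,
      ((if m ∈ S then c else 0) - (if m ∈ T then d else 0)) ^ 2
        = if m ∈ S then c ^ 2 else if m ∈ T then d ^ 2 else 0 := by
    intro m
    by_cases hmS : m ∈ S
    · have hmT : m ∉ T := fun hmT => (Finset.disjoint_left.mp hST hmS) hmT
      simp [hmS, hmT]
    · by_cases hmT : m ∈ T <;> simp [hmS, hmT]
  have htsum : (∑' m, ((if m ∈ S then c else 0) - (if m ∈ T then d else 0)) ^ 2)
      = (k + 1 : ℝ) * c ^ 2 + (l + 1 : ℝ) * d ^ 2 := by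
    have h1 : (∑' m, ((if m ∈ S then c else 0) - (if m ∈ T then d else 0)) ^ 2)
        = ∑ m ∈ S ∪ T, ((if m ∈ S then c else 0) - (if m ∈ T then d else 0)) ^ 2 := by
      refine tsum_eq_sum ?_
      intro m hm
      rw [Finset.mem_union] at hm
      push_neg at hm
      simp [hm.1, hm.2]
    rw [h1]
    have h2 : ∀ m ∈ S ∪ T,
        ((if m ∈ S then c else 0) - (if m ∈ T then d else 0)) ^ 2
          = if m ∈ S then c ^ 2 else if m ∈ T then d ^ 2 else 0 := fun m _ => hfun m
    rw [Finset.sum_congr rfl h2, Finset.sum_union hST]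
    have hSsum : (∑ m ∈ S, if m ∈ S then c ^ 2 else if m ∈ T then d ^ 2 else 0)
        = (k + 1 : ℝ) * c ^ 2 := by
      have hcong : ∀ m ∈ S,
          (if m ∈ S then c ^ 2 else if m ∈ T then d ^ 2 else 0) = c ^ 2 :=
        fun m hm => by simp [hm]
      rw [Finset.sum_congr rfl hcong, Finset.sum_const, hS]
      ring
    have hTsum : (∑ m ∈ T, if m ∈ S then c ^ 2 else if m ∈ T then d ^ 2 else 0)
        = (l + 1 : ℝ) * d ^ 2 := by
      have hcong : ∀ m ∈ T,
          (if m ∈ S then c ^ 2 else if m ∈ T then d ^ 2 else 0) = d ^ 2 := fun m hm => by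
        have hmS : m ∉ S := fun hmS => (Finset.disjoint_left.mp hST hmS) hm
        simp [hm, hmS]
      rw [Finset.sum_congr rfl hcong, Finset.sum_const, hT]
      ring
    rw [hSsum, hTsum]
  have hc2 : (k + 1 : ℝ) * c ^ 2 = κ ^ 2 / (2 * ((k:ℝ) + 1)) := by
    rw [hc]; field_simp; ring_nf; rw [hs2]
  have hd2 : (l + 1 : ℝ) * d ^ 2 = κ ^ 2 / (2 * ((l:ℝ) + 1)) := by
    rw [hd]; field_simp; ring_nf; rw [hs2]
  have hnpos : (0:ℝ) < (n:ℝ) + 1 := by positivity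
  have hbound : κ ^ 2 / ((n:ℝ) + 1)
      ≤ (k + 1 : ℝ) * c ^ 2 + (l + 1 : ℝ) * d ^ 2 := by
    rw [hc2, hd2]
    have h1 : κ ^ 2 / (2 * ((n:ℝ) + 1)) ≤ κ ^ 2 / (2 * ((k:ℝ) + 1)) := by
      apply div_le_div_of_nonneg_left (by positivity) (by positivity)
      have : (k:ℝ) ≤ n := by exact_mod_cast hk
      linarith
    have h2 : κ ^ 2 / (2 * ((n:ℝ) + 1)) ≤ κ ^ 2 / (2 * ((l:ℝ) + 1)) := by
      apply div_le_div_of_nonneg_left (by positivity) (by positivity)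
      have : (l:ℝ) ≤ n := by exact_mod_cast hl
      linarith
    have : κ ^ 2 / ((n:ℝ) + 1) = κ ^ 2 / (2 * ((n:ℝ) + 1)) + κ ^ 2 / (2 * ((n:ℝ) + 1)) := by
      field_simp; ring
    linarith
  unfold l2d
  rw [htsum]
  have hfinal : κ / Real.sqrt ((n:ℝ) + 1) = Real.sqrt (κ ^ 2 / ((n:ℝ) + 1)) := by
    rw [Real.sqrt_div (by positivity), Real.sqrt_sq hκ.le]
  rw [hfinal]
  exact Real.sqrt_le_sqrt hbound
end

section
/- The distance between two disjoint simplices (as subsets of ℓ²) of dimensions k and l in Δ_κ equals (κ/√2)·√(1/(k+1) + 1/(l+1)), which is the distance between their barycenters. -/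
/-- The simplex of `Δ_κ` spanned by the index set `σ`:
points with non-negative coordinates summing to `κ/√2` supported inside `σ`. -/
def simplexOn (κ : ℝ) (σ : Finset ℕ) : Set (ℕ → ℝ) :=
  {x | (∀ m, 0 ≤ x m) ∧ (∑' m, x m) = κ / Real.sqrt 2 ∧ ∀ m, x m ≠ 0 → m ∈ σ}

/-- The barycenter of the simplex spanned by the index set `σ`. -/
noncomputable def baryOn (κ : ℝ) (σ : Finset ℕ) : ℕ → ℝ :=
  fun i => if i ∈ σ then κ / ((σ.card : ℝ) * Real.sqrt 2) else 0

lemma tsum_sub_sq (x y : ℕ → ℝ) (S T : Finset ℕ) (hST : Disjoint S T)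
    (hx : ∀ m, x m ≠ 0 → m ∈ S) (hy : ∀ m, y m ≠ 0 → m ∈ T) :
    ∑' m, (x m - y m)^2 = ∑ m ∈ S, (x m)^2 + ∑ m ∈ T, (y m)^2 := by
  have hx0 : ∀ m ∉ S, x m = 0 := fun m hm => by
    by_contra h; exact hm (hx m h)
  have hy0 : ∀ m ∉ T, y m = 0 := fun m hm => by
    by_contra h; exact hm (hy m h)
  rw [tsum_eq_sum (s := S ∪ T) (by
    intro m hm
    simp only [Finset.mem_union, not_or] at hm
    rw [hx0 m hm.1, hy0 m hm.2]; ring)]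
  rw [Finset.sum_union hST]
  congr 1
  · apply Finset.sum_congr rfl
    intro m hm
    rw [hy0 m (Finset.disjoint_left.mp hST hm)]; ring
  · apply Finset.sum_congr rfl
    intro m hm
    rw [hx0 m (Finset.disjoint_right.mp hST hm)]; ring

lemma simplex_tsum_eq_sum (κ : ℝ) (σ : Finset ℕ) (x : ℕ → ℝ)
    (hx : x ∈ simplexOn κ σ) : ∑ m ∈ σ, x m = κ / Real.sqrt 2 := by
  obtain ⟨h1, h2, h3⟩ := hx
  rw [← h2]
  exact (tsum_eq_sum (fun m hm => by by_contra h; exact hm (h3 m h))).symm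

/-- Lower bound on the sum of squares on a simplex (Cauchy–Schwarz). -/
lemma sum_sq_lower (κ : ℝ) (σ : Finset ℕ) (x : ℕ → ℝ)
    (hx : x ∈ simplexOn κ σ) (hcard : 0 < σ.card) :
    (κ / Real.sqrt 2) ^ 2 / (σ.card : ℝ) ≤ ∑ m ∈ σ, (x m) ^ 2 := by
  have hcs := sq_sum_le_card_mul_sum_sq (s := σ) (f := x)
  rw [simplex_tsum_eq_sum κ σ x hx] at hcs
  have hcpos : (0:ℝ) < (σ.card : ℝ) := by exact_mod_cast hcard
  rw [div_le_iff₀ hcpos]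
  linarith [hcs]

lemma bary_mem (κ : ℝ) (hκ : 0 < κ) (σ : Finset ℕ) (hcard : 0 < σ.card) :
    baryOn κ σ ∈ simplexOn κ σ := by
  have hcpos : (0:ℝ) < (σ.card : ℝ) := by exact_mod_cast hcard
  have hs2 : (0:ℝ) < Real.sqrt 2 := Real.sqrt_pos.mpr (by norm_num)
  refine ⟨?_, ?_, ?_⟩
  · intro m
    unfold baryOn
    split
    · positivity
    · exact le_refl 0
  · rw [tsum_eq_sum (s := σ) (fun m hm => by simp [baryOn, hm])]
    rw [Finset.sum_congr rfl (fun m hm =>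
      show baryOn κ σ m = κ / ((σ.card : ℝ) * Real.sqrt 2) by simp [baryOn, hm])]
    rw [Finset.sum_const, nsmul_eq_mul]
    field_simp
  · intro m hm
    by_contra h
    exact hm (by simp [baryOn, h])

lemma bary_sum_sq (κ : ℝ) (σ : Finset ℕ) (hcard : 0 < σ.card) :
    ∑ m ∈ σ, (baryOn κ σ m) ^ 2 = κ ^ 2 / 2 / (σ.card : ℝ) := by
  have hcpos : (0:ℝ) < (σ.card : ℝ) := by exact_mod_cast hcard
  have hs2 : Real.sqrt 2 ^ 2 = 2 := Real.sq_sqrt (by norm_num)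
  rw [Finset.sum_congr rfl (fun m hm =>
    show (baryOn κ σ m) ^ 2 = (κ / ((σ.card : ℝ) * Real.sqrt 2)) ^ 2 by
      simp [baryOn, hm])]
  rw [Finset.sum_const, nsmul_eq_mul, div_pow, mul_pow, hs2]
  field_simp

/-- The distance between two disjoint simplices of dimensions `k` and `l` in `Δ_κ`
equals `(κ/√2)·√(1/(k+1) + 1/(l+1))`, which is the distance between their
barycenters. -/
theorem stmt4 (κ : ℝ) (hκ : 0 < κ) (k l : ℕ) (S T : Finset ℕ)
    (hS : S.card = k + 1) (hT : T.card = l + 1) (hST : Disjoint S T) :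
    sInf {d : ℝ | ∃ x ∈ simplexOn κ S, ∃ y ∈ simplexOn κ T, d = l2d x y}
        = (κ / Real.sqrt 2) * Real.sqrt (1 / ((k : ℝ) + 1) + 1 / ((l : ℝ) + 1)) ∧
      l2d (baryOn κ S) (baryOn κ T)
        = (κ / Real.sqrt 2) * Real.sqrt (1 / ((k : ℝ) + 1) + 1 / ((l : ℝ) + 1)) := by
  have hs2 : (0:ℝ) < Real.sqrt 2 := Real.sqrt_pos.mpr (by norm_num)
  have hs2sq : Real.sqrt 2 ^ 2 = 2 := Real.sq_sqrt (by norm_num)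
  have hk1 : (0:ℝ) < (k:ℝ) + 1 := by positivity
  have hl1 : (0:ℝ) < (l:ℝ) + 1 := by positivity
  set c : ℝ := κ / Real.sqrt 2 with hc
  have hcpos : 0 < c := div_pos hκ hs2
  set s : ℝ := 1 / ((k : ℝ) + 1) + 1 / ((l : ℝ) + 1) with hsdef
  have hsnn : 0 ≤ s := by positivity
  set v : ℝ := c * Real.sqrt s with hv
  have hvnn : 0 ≤ v := by positivity
  have hvsq : v ^ 2 = c ^ 2 / ((k:ℝ)+1) + c ^ 2 / ((l:ℝ)+1) := by
    rw [hv, mul_pow, Real.sq_sqrt hsnn, hsdef]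
    field_simp
  have hcsq : c ^ 2 = κ ^ 2 / 2 := by
    rw [hc, div_pow, hs2sq]
  have hSpos : 0 < S.card := by omega
  have hTpos : 0 < T.card := by omega
  -- barycenter distance
  have hbary : l2d (baryOn κ S) (baryOn κ T) = v := by
    unfold l2d
    rw [tsum_sub_sq _ _ S T hST
      (fun m hm => by by_contra h; exact hm (by simp [baryOn, h]))
      (fun m hm => by by_contra h; exact hm (by simp [baryOn, h]))]
    rw [bary_sum_sq κ S hSpos, bary_sum_sq κ T hTpos, hS, hT]
    have : κ ^ 2 / 2 / ((k+1 : ℕ) : ℝ) + κ ^ 2 / 2 / ((l+1 : ℕ) : ℝ) = v ^ 2 := by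
      rw [hvsq, hcsq]; push_cast; ring
    rw [this, Real.sqrt_sq hvnn]
  -- lower bound
  have hlb : ∀ d ∈ {d : ℝ | ∃ x ∈ simplexOn κ S, ∃ y ∈ simplexOn κ T, d = l2d x y},
      v ≤ d := by
    rintro d ⟨x, hx, y, hy, rfl⟩
    unfold l2d
    rw [tsum_sub_sq _ _ S T hST hx.2.2 hy.2.2]
    have h1 := sum_sq_lower κ S x hx hSpos
    have h2 := sum_sq_lower κ T y hy hTpos
    rw [hS] at h1; rw [hT] at h2
    have hge : v ^ 2 ≤ ∑ m ∈ S, (x m) ^ 2 + ∑ m ∈ T, (y m) ^ 2 := by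
      rw [hvsq]
      push_cast at h1 h2
      linarith
    calc v = Real.sqrt (v ^ 2) := (Real.sqrt_sq hvnn).symm
      _ ≤ _ := Real.sqrt_le_sqrt hge
  have hmem : v ∈ {d : ℝ | ∃ x ∈ simplexOn κ S, ∃ y ∈ simplexOn κ T, d = l2d x y} :=
    ⟨baryOn κ S, bary_mem κ hκ S hSpos, baryOn κ T, bary_mem κ hκ T hTpos, hbary.symm⟩
  refine ⟨le_antisymm (csInf_le ⟨v, hlb⟩ hmem) (le_csInf ⟨v, hmem⟩ hlb), hbary⟩
end

section
/- Let K be an at most n-dimensional uniform complex of scale κ in ℓ². For any point p ∈ K, the largest coordinate of p is at least κ/(√2·(n+1)), and if q ∈ K has support disjoint from {m₀} where m₀ is an index of a largest coordinate of p, then ‖p − q‖₂ ≥ κ/(√2·(n+1)). Consequently, the Lebesgue number of the cover of K by open stars of vertices is at least κ/(√2·(n+1)). -/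
/-- Let `K` be an at most `n`-dimensional uniform complex of scale `κ` in `ℓ²`
(every point has non-negative coordinates summing to `κ/√2` and finite support of
cardinality at most `n+1`).  Then for every `p ∈ K` there is an index `m₀` of a
largest coordinate of `p`, which is at least `κ/(√2·(n+1))`; if `q ∈ K` has
support disjoint from `{m₀}` then `‖p − q‖₂ ≥ κ/(√2·(n+1))`.  Consequently,
every subset of `K` of diameter less than `κ/(√2·(n+1))` lies in the open star
of some vertex, i.e. the Lebesgue number of the cover by open stars of vertices
is at least `κ/(√2·(n+1))`. -/
theorem stmt12 (κ : ℝ) (hκ : 0 < κ) (n : ℕ) (K : Set (ℕ → ℝ))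
    (hK : ∀ x ∈ K, (∀ m, 0 ≤ x m) ∧ (∑' m, x m) = κ / Real.sqrt 2 ∧
      {m | x m ≠ 0}.Finite ∧ Set.ncard {m | x m ≠ 0} ≤ n + 1) :
    (∀ p ∈ K, ∃ m₀ : ℕ, (∀ m, p m ≤ p m₀) ∧
        κ / (Real.sqrt 2 * ((n : ℝ) + 1)) ≤ p m₀ ∧
        ∀ q ∈ K, q m₀ = 0 → κ / (Real.sqrt 2 * ((n : ℝ) + 1)) ≤ l2d p q) ∧
      ∀ A ⊆ K, A.Nonempty →
        (∀ x ∈ A, ∀ y ∈ A, l2d x y < κ / (Real.sqrt 2 * ((n : ℝ) + 1))) →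
        ∃ v : ℕ, ∀ x ∈ A, x v ≠ 0 := by
  have h2 : (0:ℝ) < Real.sqrt 2 := by positivity
  have hb : (0:ℝ) < Real.sqrt 2 * ((n : ℝ) + 1) := by positivity
  have main : ∀ p ∈ K, ∃ m₀ : ℕ, (∀ m, p m ≤ p m₀) ∧
      κ / (Real.sqrt 2 * ((n : ℝ) + 1)) ≤ p m₀ ∧
      ∀ q ∈ K, q m₀ = 0 → κ / (Real.sqrt 2 * ((n : ℝ) + 1)) ≤ l2d p q := by
    intro p hp
    obtain ⟨hpos, hsum, hfin, hcard⟩ := hK p hp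
    set F := hfin.toFinset with hF
    have hmemF : ∀ m, m ∈ F ↔ p m ≠ 0 := fun m => by
      simp [hF, Set.Finite.mem_toFinset]
    have hsum' : ∑ m ∈ F, p m = κ / Real.sqrt 2 := by
      rw [← hsum]
      exact (tsum_eq_sum (fun m hm => by
        have := (hmemF m).not.mp hm; simpa using this)).symm
    have hFne : F.Nonempty := by
      by_contra h
      rw [Finset.not_nonempty_iff_eq_empty] at h
      rw [h, Finset.sum_empty] at hsum'
      have := div_pos hκ h2
      linarith
    obtain ⟨m₀, hm₀F, hmax⟩ := F.exists_max_image p hFne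
    have hmax' : ∀ m, p m ≤ p m₀ := by
      intro m
      by_cases hm : m ∈ F
      · exact hmax m hm
      · have : p m = 0 := by simpa using (hmemF m).not.mp hm
        rw [this]; exact hpos m₀
    have hcardF : (F.card : ℝ) ≤ (n : ℝ) + 1 := by
      have : F.card ≤ n + 1 := by
        rw [hF, ← Set.ncard_eq_toFinset_card _ hfin]
        exact hcard
      exact_mod_cast this
    have h1 : κ / Real.sqrt 2 ≤ ((n : ℝ) + 1) * p m₀ := by
      rw [← hsum']
      calc ∑ m ∈ F, p m ≤ ∑ _m ∈ F, p m₀ := Finset.sum_le_sum (fun m hm => hmax m hm)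
        _ = (F.card : ℝ) * p m₀ := by rw [Finset.sum_const, nsmul_eq_mul]
        _ ≤ ((n : ℝ) + 1) * p m₀ := mul_le_mul_of_nonneg_right hcardF (hpos m₀)
    have hval : κ / (Real.sqrt 2 * ((n : ℝ) + 1)) ≤ p m₀ := by
      rw [div_le_iff₀ hb]
      have h' := (div_le_iff₀ h2).mp h1
      calc κ ≤ ((n : ℝ) + 1) * p m₀ * Real.sqrt 2 := h'
        _ = p m₀ * (Real.sqrt 2 * ((n : ℝ) + 1)) := by ring
    refine ⟨m₀, hmax', hval, ?_⟩
    intro q hq hq0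
    obtain ⟨hqpos, hqsum, hqfin, _⟩ := hK q hq
    have hsummable : Summable (fun m => (p m - q m) ^ 2) := by
      apply summable_of_ne_finset_zero (s := F ∪ hqfin.toFinset)
      intro m hm
      rw [Finset.mem_union] at hm
      push_neg at hm
      have h1 : p m = 0 := by simpa using (hmemF m).not.mp hm.1
      have h2 : q m = 0 := by
        have := hm.2
        simp [Set.Finite.mem_toFinset] at this
        exact this
      simp [h1, h2]
    have hle : p m₀ ≤ l2d p q := by
      unfold l2d
      have h' : (p m₀) ^ 2 ≤ ∑' m, (p m - q m) ^ 2 := by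
        have := Summable.le_tsum hsummable m₀ (fun j _ => sq_nonneg _)
        simpa [hq0] using this
      calc p m₀ = Real.sqrt ((p m₀) ^ 2) := (Real.sqrt_sq (hpos m₀)).symm
        _ ≤ Real.sqrt (∑' m, (p m - q m) ^ 2) := Real.sqrt_le_sqrt h'
    linarith
  refine ⟨main, ?_⟩
  intro A hA hAne hdiam
  obtain ⟨x₀, hx₀⟩ := hAne
  obtain ⟨m₀, _, _, hdist⟩ := main x₀ (hA hx₀)
  refine ⟨m₀, fun x hx hx0 => ?_⟩
  have h1 := hdist x (hA hx) hx0
  have h2 := hdiam x₀ hx₀ x hx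
  linarith
end

section
/- Let (𝒰_m)_{m∈ℤ} be a sequence of covers of a metric space X such that each 𝒰_m has multiplicity at most n+1, finite mesh, positive Lebesgue number λ(𝒰_m) > 0, and 𝒰_m star-refines 𝒰_{m+1}. Let φ : X → ulim N(𝒰) be a canonical function into the uniform limit of the associated sequence of nerves (with N_m realized at scale 2^{m/2}). Then for all x₁, x₂ ∈ X: (1) if d(x₁, x₂) ≤ λ(𝒰_k) then d(φ(x₁), φ(x₂)) ≤ 2^{k/2}; (2) if d(x₁, x₂) > mesh(𝒰_k) then d(φ(x₁), φ(x₂)) ≥ 2^{k/2}/√(n+1). -/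
open ENNReal

/-- The ℓ² distance between two points of a nerve, recorded by their barycentric
coordinates (indexed by the elements of the cover). -/
noncomputable def l2dg {α : Type*} (a b : α → ℝ) : ℝ :=
  Real.sqrt (∑' v, (a v - b v) ^ 2)

/-- Bounds for a canonical function into the uniform limit of a sequence of
nerves.  `(𝒰_m)_{m∈ℤ}` is a sequence of covers of `X`, each of multiplicity at
most `n+1`, finite mesh `mesh m`, positive Lebesgue number `lam m`, with `𝒰_m`
star-refining `𝒰_{m+1}`.  The nerve `N_m` is realized at scale `2^{m/2}`: the
`m`-th coordinate `φ x m` of the canonical function has non-negative coordinates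
summing to `2^{m/2}/√2`, supported on elements of `𝒰_m` containing `x`; the
bonding maps (induced by inclusions, barycentric, hence `1`-Lipschitz on closed
stars by the choice of scales) do not increase distances of coordinates of
points lying in a common element.  Then, in the sup metric of the uniform limit:
(1) if `d(x₁,x₂) ≤ λ(𝒰_k)` then `d(φ x₁, φ x₂) ≤ 2^{k/2}`;
(2) if `d(x₁,x₂) > mesh(𝒰_k)` then `d(φ x₁, φ x₂) ≥ 2^{k/2}/√(n+1)`. -/
theorem stmt19 {X : Type*} [MetricSpace X] (n : ℕ)
    (U : ℤ → Set (Set X)) (mesh lam : ℤ → ℝ)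
    (hlam : ∀ m, 0 < lam m)
    (hmesh : ∀ m, ∀ V ∈ U m, ∀ a ∈ V, ∀ b ∈ V, dist a b ≤ mesh m)
    (hmult : ∀ (m : ℤ) (x : X), {V : Set X | V ∈ U m ∧ x ∈ V}.Finite ∧
      Set.ncard {V : Set X | V ∈ U m ∧ x ∈ V} ≤ n + 1)
    (hLeb : ∀ (m : ℤ) (x y : X), dist x y ≤ lam m → ∃ V ∈ U m, x ∈ V ∧ y ∈ V)
    (hstar : ∀ m, ∀ V ∈ U m, ∃ W ∈ U (m + 1),
      ∀ V' ∈ U m, (V' ∩ V).Nonempty → V' ⊆ W)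
    (φ : X → ℤ → Set X → ℝ)
    (hcanon : ∀ (x : X) (m : ℤ), (∀ V, 0 ≤ φ x m V) ∧
      (∑' V : Set X, φ x m V) = (2 : ℝ) ^ ((m : ℝ) / 2) / Real.sqrt 2 ∧
      ∀ V, φ x m V ≠ 0 → V ∈ U m ∧ x ∈ V)
    (hlip : ∀ (m : ℤ) (x₁ x₂ : X), (∃ V ∈ U m, x₁ ∈ V ∧ x₂ ∈ V) →
      l2dg (φ x₁ (m + 1)) (φ x₂ (m + 1)) ≤ l2dg (φ x₁ m) (φ x₂ m)) :
    ∀ (k : ℤ) (x₁ x₂ : X),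
      (dist x₁ x₂ ≤ lam k →
        (⨆ m : ℤ, ENNReal.ofReal (l2dg (φ x₁ m) (φ x₂ m)))
          ≤ ENNReal.ofReal ((2 : ℝ) ^ ((k : ℝ) / 2))) ∧
      (mesh k < dist x₁ x₂ →
        ENNReal.ofReal ((2 : ℝ) ^ ((k : ℝ) / 2) / Real.sqrt ((n : ℝ) + 1))
          ≤ ⨆ m : ℤ, ENNReal.ofReal (l2dg (φ x₁ m) (φ x₂ m))) := by

  intro k x₁ x₂
  set p : ℤ → ℝ := fun m => (2 : ℝ) ^ ((m : ℝ) / 2) with hp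
  have hppos : ∀ m, 0 < p m := fun m => Real.rpow_pos_of_pos two_pos _
  -- the finite support finset of a point at a level
  have hTfin : ∀ (x : X) (m : ℤ), {V : Set X | V ∈ U m ∧ x ∈ V}.Finite :=
    fun x m => (hmult m x).1
  -- sum of φ over any finset containing its support
  have hsum : ∀ (x : X) (m : ℤ) (T : Finset (Set X)),
      (∀ V, φ x m V ≠ 0 → V ∈ T) →
      ∑ V ∈ T, φ x m V = p m / Real.sqrt 2 := by
    intro x m T hT
    have := (hcanon x m).2.1
    rwa [tsum_eq_sum (s := T) (fun b hb => by
      by_contra h; exact hb (hT b h))] at this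
  -- universal upper bound at each level
  have hBound : ∀ (m : ℤ) (y₁ y₂ : X), l2dg (φ y₁ m) (φ y₂ m) ≤ p m := by
    intro m y₁ y₂
    classical
    set T : Finset (Set X) := (hTfin y₁ m).toFinset ∪ (hTfin y₂ m).toFinset with hT
    have hmem₁ : ∀ V, φ y₁ m V ≠ 0 → V ∈ T := by
      intro V hV
      exact Finset.mem_union_left _ ((hTfin y₁ m).mem_toFinset.2 ((hcanon y₁ m).2.2 V hV))
    have hmem₂ : ∀ V, φ y₂ m V ≠ 0 → V ∈ T := by
      intro V hV
      exact Finset.mem_union_right _ ((hTfin y₂ m).mem_toFinset.2 ((hcanon y₂ m).2.2 V hV))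
    have htsum : (∑' V, (φ y₁ m V - φ y₂ m V) ^ 2)
        = ∑ V ∈ T, (φ y₁ m V - φ y₂ m V) ^ 2 := by
      refine tsum_eq_sum (fun b hb => ?_)
      have h1 : φ y₁ m b = 0 := by_contra fun h => hb (hmem₁ b h)
      have h2 : φ y₂ m b = 0 := by_contra fun h => hb (hmem₂ b h)
      rw [h1, h2]; ring
    have hle : ∑ V ∈ T, (φ y₁ m V - φ y₂ m V) ^ 2
        ≤ (∑ V ∈ T, φ y₁ m V) ^ 2 + (∑ V ∈ T, φ y₂ m V) ^ 2 := by
      calc ∑ V ∈ T, (φ y₁ m V - φ y₂ m V) ^ 2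
          ≤ ∑ V ∈ T, ((φ y₁ m V) ^ 2 + (φ y₂ m V) ^ 2) := by
            refine Finset.sum_le_sum fun V _ => ?_
            have := mul_nonneg ((hcanon y₁ m).1 V) ((hcanon y₂ m).1 V)
            nlinarith
        _ = (∑ V ∈ T, (φ y₁ m V) ^ 2) + ∑ V ∈ T, (φ y₂ m V) ^ 2 :=
            Finset.sum_add_distrib
        _ ≤ (∑ V ∈ T, φ y₁ m V) ^ 2 + (∑ V ∈ T, φ y₂ m V) ^ 2 := by
            gcongr ?_ + ?_ <;>
            exact Finset.sum_sq_le_sq_sum_of_nonneg (fun V _ => (hcanon _ m).1 V)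
    rw [hsum y₁ m T hmem₁, hsum y₂ m T hmem₂] at hle
    have hsq2 : (p m / Real.sqrt 2) ^ 2 + (p m / Real.sqrt 2) ^ 2 = p m ^ 2 := by
      have h2 : Real.sqrt 2 ^ 2 = 2 := Real.sq_sqrt (by norm_num)
      rw [div_pow, h2]; ring
    rw [hsq2] at hle
    have : l2dg (φ y₁ m) (φ y₂ m) ≤ Real.sqrt (p m ^ 2) := by
      rw [l2dg, htsum]
      exact Real.sqrt_le_sqrt hle
    rwa [Real.sqrt_sq (hppos m).le] at this
  refine ⟨?_, ?_⟩
  · -- part (1)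
    intro hd
    -- common elements and monotonicity for m ≥ k
    have hmono : ∀ m, k ≤ m → (∃ V ∈ U m, x₁ ∈ V ∧ x₂ ∈ V) ∧
        l2dg (φ x₁ m) (φ x₂ m) ≤ l2dg (φ x₁ k) (φ x₂ k) := by
      refine Int.le_induction ⟨hLeb k x₁ x₂ hd, le_rfl⟩ ?_
      intro m hm ih
      · obtain ⟨⟨V, hV, h1, h2⟩, hle⟩ := ih
        obtain ⟨W, hW, hWstar⟩ := hstar m V hV
        have hVW : V ⊆ W := hWstar V hV ⟨x₁, h1, h1⟩
        refine ⟨⟨W, hW, hVW h1, hVW h2⟩, ?_⟩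
        exact (hlip m x₁ x₂ ⟨V, hV, h1, h2⟩).trans hle
    refine iSup_le fun m => ENNReal.ofReal_le_ofReal ?_
    rcases le_total m k with h | h
    · refine (hBound m x₁ x₂).trans ?_
      exact Real.rpow_le_rpow_of_exponent_le one_le_two
        (by have : (m : ℝ) ≤ (k : ℝ) := Int.cast_le.2 h; linarith)
    · exact ((hmono m h).2).trans (hBound k x₁ x₂)
  · -- part (2)
    intro hd
    classical
    -- supports at level k are disjoint
    have hdisj : ∀ V, φ x₁ k V = 0 ∨ φ x₂ k V = 0 := by
      intro V
      by_contra h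
      push_neg at h
      obtain ⟨hV, hx1⟩ := (hcanon x₁ k).2.2 V h.1
      obtain ⟨_, hx2⟩ := (hcanon x₂ k).2.2 V h.2
      exact absurd (hmesh k V hV x₁ hx1 x₂ hx2) (not_le.2 hd)
    set T₁ : Finset (Set X) := (hTfin x₁ k).toFinset with hT1
    set T₂ : Finset (Set X) := (hTfin x₂ k).toFinset with hT2
    set T : Finset (Set X) := T₁ ∪ T₂ with hT
    have hmem₁ : ∀ V, φ x₁ k V ≠ 0 → V ∈ T₁ :=
      fun V hV => (hTfin x₁ k).mem_toFinset.2 ((hcanon x₁ k).2.2 V hV)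
    have hmem₂ : ∀ V, φ x₂ k V ≠ 0 → V ∈ T₂ :=
      fun V hV => (hTfin x₂ k).mem_toFinset.2 ((hcanon x₂ k).2.2 V hV)
    have hcard : ∀ (x : X), ((hTfin x k).toFinset.card : ℝ) ≤ (n : ℝ) + 1 := by
      intro x
      have h1 := (hmult k x).2
      rw [Set.ncard_eq_toFinset_card _ (hTfin x k)] at h1
      exact_mod_cast (by exact_mod_cast h1 : ((hTfin x k).toFinset.card : ℝ) ≤ ((n : ℕ) + 1 : ℕ))
    -- Cauchy-Schwarz lower bound for each point
    have hCS : ∀ (x : X) (Tx : Finset (Set X)), (∀ V, φ x k V ≠ 0 → V ∈ Tx) →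
        ((Tx.card : ℝ) ≤ (n : ℝ) + 1) →
        (p k / Real.sqrt 2) ^ 2 / ((n : ℝ) + 1) ≤ ∑ V ∈ Tx, (φ x k V) ^ 2 := by
      intro x Tx hTx hc
      have h1 : (∑ V ∈ Tx, φ x k V) ^ 2 ≤ (Tx.card : ℝ) * ∑ V ∈ Tx, (φ x k V) ^ 2 :=
        sq_sum_le_card_mul_sum_sq
      rw [hsum x k Tx hTx] at h1
      have hq : (0:ℝ) ≤ ∑ V ∈ Tx, (φ x k V) ^ 2 :=
        Finset.sum_nonneg fun V _ => sq_nonneg _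
      have hn : (0:ℝ) < (n : ℝ) + 1 := by positivity
      rw [div_le_iff₀ hn]
      calc (p k / Real.sqrt 2) ^ 2 ≤ (Tx.card : ℝ) * ∑ V ∈ Tx, (φ x k V) ^ 2 := h1
        _ ≤ ((n : ℝ) + 1) * ∑ V ∈ Tx, (φ x k V) ^ 2 := by gcongr
        _ = (∑ V ∈ Tx, (φ x k V) ^ 2) * ((n : ℝ) + 1) := by ring
    have h1 := hCS x₁ T₁ hmem₁ (hcard x₁)
    have h2 := hCS x₂ T₂ hmem₂ (hcard x₂)
    have htsum : (∑' V, (φ x₁ k V - φ x₂ k V) ^ 2)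
        = ∑ V ∈ T, (φ x₁ k V - φ x₂ k V) ^ 2 := by
      refine tsum_eq_sum (fun b hb => ?_)
      have hb1 : φ x₁ k b = 0 := by_contra fun h => hb (Finset.mem_union_left _ (hmem₁ b h))
      have hb2 : φ x₂ k b = 0 := by_contra fun h => hb (Finset.mem_union_right _ (hmem₂ b h))
      rw [hb1, hb2]; ring
    have hptws : ∀ V, (φ x₁ k V - φ x₂ k V) ^ 2 = (φ x₁ k V) ^ 2 + (φ x₂ k V) ^ 2 := by
      intro V
      rcases hdisj V with h | h <;> rw [h] <;> ring
    have hsumsplit : ∑ V ∈ T, (φ x₁ k V - φ x₂ k V) ^ 2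
        = (∑ V ∈ T, (φ x₁ k V) ^ 2) + ∑ V ∈ T, (φ x₂ k V) ^ 2 := by
      rw [← Finset.sum_add_distrib]
      exact Finset.sum_congr rfl fun V _ => hptws V
    have hsub1 : ∑ V ∈ T₁, (φ x₁ k V) ^ 2 ≤ ∑ V ∈ T, (φ x₁ k V) ^ 2 :=
      Finset.sum_le_sum_of_subset_of_nonneg (Finset.subset_union_left)
        (fun V _ _ => sq_nonneg _)
    have hsub2 : ∑ V ∈ T₂, (φ x₂ k V) ^ 2 ≤ ∑ V ∈ T, (φ x₂ k V) ^ 2 :=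
      Finset.sum_le_sum_of_subset_of_nonneg (Finset.subset_union_right)
        (fun V _ _ => sq_nonneg _)
    have hkey : p k ^ 2 / ((n : ℝ) + 1) ≤ ∑' V, (φ x₁ k V - φ x₂ k V) ^ 2 := by
      rw [htsum, hsumsplit]
      have hsq2 : (p k / Real.sqrt 2) ^ 2 / ((n : ℝ) + 1)
          + (p k / Real.sqrt 2) ^ 2 / ((n : ℝ) + 1) = p k ^ 2 / ((n : ℝ) + 1) := by
        have h2 : Real.sqrt 2 ^ 2 = 2 := Real.sq_sqrt (by norm_num)
        have hn : (0:ℝ) < (n : ℝ) + 1 := by positivity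
        field_simp
        nlinarith [h2]
      linarith [h1.trans hsub1, h2.trans hsub2]
    have hlow : p k / Real.sqrt ((n : ℝ) + 1) ≤ l2dg (φ x₁ k) (φ x₂ k) := by
      have := Real.sqrt_le_sqrt hkey
      rwa [Real.sqrt_div (sq_nonneg _) _, Real.sqrt_sq (hppos k).le] at this
    calc ENNReal.ofReal (p k / Real.sqrt ((n : ℝ) + 1))
        ≤ ENNReal.ofReal (l2dg (φ x₁ k) (φ x₂ k)) := ENNReal.ofReal_le_ofReal hlow
      _ ≤ ⨆ m : ℤ, ENNReal.ofReal (l2dg (φ x₁ m) (φ x₂ m)) :=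
          le_iSup (fun m => ENNReal.ofReal (l2dg (φ x₁ m) (φ x₂ m))) k
end
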